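/- arXiv:2310.17387 — 3 statements merged into one kernel-verified Lean document; each statement's English description precedes it below -/
import Mathlib

section
/- Let a, b > 0 be real numbers and let f : ℝ → [0,∞] be a measurable function. Then the iterated lower Lebesgue integral ∫_{t∈(0,∞)} ∫_{τ∈(0,∞)} t^{a−1} · τ^{b−1} · f(t+τ) dτ dt equals (Γ(a)Γ(b)/Γ(a+b)) · ∫_{s∈(0,∞)} s^{a+b−1} · f(s) ds, where Γ is the real Gamma function. -/
/-!
Substituting `s = t + τ` and applying Tonelli on the triangle `0 < t < s` reduces the claim to
the inner integral `∫_{0<t<s} t^(a-1) (s-t)^(b-1) dt`, which the scaling `t = s x` turns into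
`s^(a+b-1) B(a,b)`; the value `B(a,b) = Γ(a)Γ(b)/Γ(a+b)` comes from the normalisation of the beta
distribution.
-/

open MeasureTheory Set ProbabilityTheory
open scoped ENNReal

theorem setLIntegral_Ioi_zero_comp_const_add (t : ℝ) (g : ℝ → ℝ≥0∞) :
    ∫⁻ τ in Ioi 0, g (t + τ) = ∫⁻ s in Ioi t, g s := by
  rw [← (measurePreserving_add_left volume t).setLIntegral_comp_preimage_emb
    (measurableEmbedding_addLeft t) g (Ioi t), preimage_const_add_Ioi, sub_self]

theorem lintegral_Ioi_lintegral_Ioi_eq_lintegral_Ioi_lintegral_Ioo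
    (μ ν : Measure ℝ) [SFinite μ] [SFinite ν] (c : ℝ) {G : ℝ → ℝ → ℝ≥0∞}
    (hG : Measurable (Function.uncurry G)) :
    ∫⁻ t in Ioi c, ∫⁻ s in Ioi t, G t s ∂ν ∂μ
      = ∫⁻ s in Ioi c, ∫⁻ t in Ioo c s, G t s ∂μ ∂ν := by
  have hmeas : Measurable fun p : ℝ × ℝ => (Ioi p.1).indicator (G p.1) p.2 :=
    hG.indicator (measurableSet_lt measurable_fst measurable_snd)
  calc ∫⁻ t in Ioi c, ∫⁻ s in Ioi t, G t s ∂ν ∂μ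
      = ∫⁻ t in Ioi c, ∫⁻ s, (Ioi t).indicator (G t) s ∂ν ∂μ := by
        simp_rw [lintegral_indicator measurableSet_Ioi]
    _ = ∫⁻ s, ∫⁻ t in Ioi c, (Iio s).indicator (G · s) t ∂μ ∂ν :=
        lintegral_lintegral_swap hmeas.aemeasurable
    _ = ∫⁻ s, ∫⁻ t in Ioo c s, G t s ∂μ ∂ν := by
        simp_rw [setLIntegral_indicator measurableSet_Iio, Iio_inter_Ioi]
    _ = ∫⁻ s in Ioi c, ∫⁻ t in Ioo c s, G t s ∂μ ∂ν := by
        refine (setLIntegral_eq_of_support_subset fun s hs => ?_).symm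
        by_contra hcs
        apply hs
        rw [Ioo_eq_empty (by simpa using hcs), Measure.restrict_empty, lintegral_zero_measure]

theorem lintegral_Ioo_zero_eq_ofReal_mul_lintegral_Ioo_zero_one {c : ℝ} (hc : 0 < c)
    (g : ℝ → ℝ≥0∞) :
    ∫⁻ t in Ioo 0 c, g t = ENNReal.ofReal c * ∫⁻ x in Ioo 0 1, g (c * x) := by
  have hemb := measurableEmbedding_mulLeft₀ hc.ne'
  conv_lhs => rw [← Real.smul_map_volume_mul_left hc.ne']
  rw [Measure.restrict_smul, lintegral_smul_measure, abs_of_pos hc, hemb.restrict_map,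
    hemb.lintegral_map, preimage_const_mul_Ioo₀ _ _ hc, zero_div, div_self hc.ne', smul_eq_mul]

theorem lintegral_Ioo_zero_one_rpow_mul_one_sub_rpow {a b : ℝ} (ha : 0 < a) (hb : 0 < b) :
    ∫⁻ x in Ioo (0 : ℝ) 1, ENNReal.ofReal (x ^ (a - 1)) * ENNReal.ofReal ((1 - x) ^ (b - 1))
      = ENNReal.ofReal (beta a b) := by
  have h := lintegral_betaPDF_eq_one ha hb
  rw [lintegral_betaPDF,
    setLIntegral_congr_fun measurableSet_Ioo (g := fun x => ENNReal.ofReal (1 / beta a b) *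
      (ENNReal.ofReal (x ^ (a - 1)) * ENNReal.ofReal ((1 - x) ^ (b - 1))))
      fun x hx => by rw [mul_assoc, ENNReal.ofReal_mul (one_div_pos.2 (beta_pos ha hb)).le,
        ENNReal.ofReal_mul (Real.rpow_nonneg hx.1.le _)],
    lintegral_const_mul' _ _ ENNReal.ofReal_ne_top, one_div,
    ENNReal.ofReal_inv_of_pos (beta_pos ha hb)] at h
  simpa using ENNReal.eq_inv_of_mul_eq_one_left ((mul_comm _ _).trans h)

theorem lintegral_Ioo_rpow_mul_sub_rpow {a b s : ℝ} (ha : 0 < a) (hb : 0 < b) (hs : 0 < s) :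
    ∫⁻ t in Ioo 0 s, ENNReal.ofReal (t ^ (a - 1)) * ENNReal.ofReal ((s - t) ^ (b - 1))
      = ENNReal.ofReal (beta a b) * ENNReal.ofReal (s ^ (a + b - 1)) := by
  have hscale : ∀ x ∈ Ioo (0 : ℝ) 1,
      ENNReal.ofReal ((s * x) ^ (a - 1)) * ENNReal.ofReal ((s - s * x) ^ (b - 1))
        = ENNReal.ofReal (s ^ (a - 1) * s ^ (b - 1)) *
          (ENNReal.ofReal (x ^ (a - 1)) * ENNReal.ofReal ((1 - x) ^ (b - 1))) := by
    intro x hx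
    rw [show s - s * x = s * (1 - x) by ring, Real.mul_rpow hs.le hx.1.le,
      Real.mul_rpow hs.le (sub_nonneg.2 hx.2.le)]
    simp only [ENNReal.ofReal_mul (Real.rpow_nonneg hs.le _)]
    ring
  have hpow : s * (s ^ (a - 1) * s ^ (b - 1)) = s ^ (a + b - 1) := by
    rw [← Real.rpow_add hs, mul_comm, ← Real.rpow_add_one hs.ne']
    ring_nf
  rw [lintegral_Ioo_zero_eq_ofReal_mul_lintegral_Ioo_zero_one hs,
    setLIntegral_congr_fun measurableSet_Ioo hscale,
    lintegral_const_mul' _ _ ENNReal.ofReal_ne_top,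
    lintegral_Ioo_zero_one_rpow_mul_one_sub_rpow ha hb, ← mul_assoc,
    ← ENNReal.ofReal_mul hs.le, hpow, mul_comm]

theorem beta_convolution_lintegral (a b : ℝ) (ha : 0 < a) (hb : 0 < b)
    (f : ℝ → ENNReal) (hf : Measurable f) :
    ∫⁻ t in Ioi (0 : ℝ), ∫⁻ τ in Ioi (0 : ℝ),
        ENNReal.ofReal (t ^ (a - 1)) * ENNReal.ofReal (τ ^ (b - 1)) * f (t + τ)
      = ENNReal.ofReal (Real.Gamma a * Real.Gamma b / Real.Gamma (a + b)) *
          ∫⁻ s in Ioi (0 : ℝ), ENNReal.ofReal (s ^ (a + b - 1)) * f s := by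
  set G : ℝ → ℝ → ℝ≥0∞ := fun t s =>
    ENNReal.ofReal (t ^ (a - 1)) * ENNReal.ofReal ((s - t) ^ (b - 1)) * f s
  have hG : Measurable (Function.uncurry G) := by fun_prop
  calc _ = ∫⁻ t in Ioi 0, ∫⁻ s in Ioi t, G t s := by
        refine lintegral_congr fun t => ?_
        rw [← setLIntegral_Ioi_zero_comp_const_add t (G t)]
        simp only [G, add_sub_cancel_left]
    _ = ∫⁻ s in Ioi 0, ∫⁻ t in Ioo 0 s, G t s :=
        lintegral_Ioi_lintegral_Ioi_eq_lintegral_Ioi_lintegral_Ioo _ _ 0 hG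
    _ = ∫⁻ s in Ioi 0,
          ENNReal.ofReal (beta a b) * (ENNReal.ofReal (s ^ (a + b - 1)) * f s) := by
        refine setLIntegral_congr_fun measurableSet_Ioi fun s hs => ?_
        rw [lintegral_mul_const _ (by fun_prop), lintegral_Ioo_rpow_mul_sub_rpow ha hb hs,
          mul_assoc]
    _ = _ := lintegral_const_mul' _ _ ENNReal.ofReal_ne_top
end

section
/- Let G be a group equipped with a measurable-space structure for which multiplication and inversion are measurable, let μ be an s-finite measure on G, and let h : ℝ × G → [0,∞] be a measurable function satisfying the Chapman–Kolmogorov property: for all t, τ > 0 and all x ∈ G, ∫_G h(t,y)·h(τ, y⁻¹x) dμ(y) = h(t+τ, x). Then for all real a, b > 0 and every x ∈ G, ∫_G (∫_{t∈(0,∞)} t^{a−1} h(t,y) dt) · (∫_{τ∈(0,∞)} τ^{b−1} h(τ, y⁻¹x) dτ) dμ(y) = (Γ(a)Γ(b)/Γ(a+b)) · ∫_{s∈(0,∞)} s^{a+b−1} h(s,x) ds. -/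
open MeasureTheory Set
open scoped ENNReal
open ProbabilityTheory (beta beta_pos)

/-!
Expanding both Riesz potentials and applying Tonelli, the `y`-integral becomes the convolution
`h(t,·) ⋆ h(τ,·)`, which the Chapman–Kolmogorov property collapses to `h(t + τ, x)`. What remains
is the one-dimensional identity
`∫∫_{t,τ>0} t^(a-1) τ^(b-1) φ(t + τ) = B(a,b) ∫_{s>0} s^(a+b-1) φ(s)`,
obtained by substituting `s = t + τ`, exchanging the order of integration over `0 < t < s`, and
evaluating the inner integral `∫_0^s t^(a-1) (s-t)^(b-1) dt = B(a,b) s^(a+b-1)`.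
-/

section Beta

variable {a b : ℝ}

theorem integral_rpow_mul_sub_rpow (ha : 0 < a) (hb : 0 < b) {s : ℝ} (hs : 0 < s) :
    ∫ t in (0 : ℝ)..s, t ^ (a - 1) * (s - t) ^ (b - 1) = beta a b * s ^ (a + b - 1) := by
  have hB : Complex.betaIntegral a b = beta a b := by
    rw [Complex.betaIntegral_eq_Gamma_mul_div _ _ (by simpa) (by simpa), ← Complex.ofReal_add]
    simp only [Complex.Gamma_ofReal, beta]
    push_cast
    rfl
  apply Complex.ofReal_injective
  rw [← intervalIntegral.integral_ofReal]
  convert Complex.betaIntegral_scaled a b hs using 1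
  · refine intervalIntegral.integral_congr fun t ht => ?_
    rw [uIcc_of_le hs.le] at ht
    rw [Complex.ofReal_mul, Complex.ofReal_cpow ht.1, Complex.ofReal_cpow (sub_nonneg.2 ht.2)]
    push_cast
    rfl
  · rw [hB, Complex.ofReal_mul, Complex.ofReal_cpow hs.le, mul_comm]
    push_cast
    rfl

theorem setLIntegral_Ioo_ofReal_rpow_mul_ofReal_sub_rpow (ha : 0 < a) (hb : 0 < b) {s : ℝ}
    (hs : 0 < s) :
    ∫⁻ t in Ioo 0 s, ENNReal.ofReal (t ^ (a - 1)) * ENNReal.ofReal ((s - t) ^ (b - 1))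
      = ENNReal.ofReal (beta a b) * ENNReal.ofReal (s ^ (a + b - 1)) := by
  have hint := integral_rpow_mul_sub_rpow ha hb hs
  have hnonneg : 0 ≤ᵐ[volume.restrict (Ioo 0 s)] fun t => t ^ (a - 1) * (s - t) ^ (b - 1) :=
    ae_restrict_of_forall_mem measurableSet_Ioo fun t ht =>
      mul_nonneg (Real.rpow_nonneg ht.1.le _) (Real.rpow_nonneg (sub_nonneg.2 ht.2.le) _)
  -- A non-integrable integrand would have interval integral `0`, not `B(a,b) s^(a+b-1) > 0`.
  have hinteg : IntegrableOn (fun t => t ^ (a - 1) * (s - t) ^ (b - 1)) (Ioo 0 s) := by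
    refine IntegrableOn.mono_set ?_ Ioo_subset_Ioc_self
    rw [← intervalIntegrable_iff_integrableOn_Ioc_of_le hs.le]
    refine intervalIntegral.intervalIntegrable_of_integral_ne_zero ?_
    rw [hint]
    exact (mul_pos (beta_pos ha hb) (Real.rpow_pos_of_pos hs _)).ne'
  rw [← ENNReal.ofReal_mul (beta_pos ha hb).le, ← hint, intervalIntegral.integral_of_le hs.le,
    integral_Ioc_eq_integral_Ioo, ofReal_integral_eq_lintegral_ofReal hinteg hnonneg]
  refine setLIntegral_congr_fun measurableSet_Ioo fun t ht => ?_
  rw [ENNReal.ofReal_mul (Real.rpow_nonneg ht.1.le _)]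

end Beta

theorem setLIntegral_Ioi_zero_comp_add_right (f : ℝ → ℝ≥0∞) (t : ℝ) :
    ∫⁻ τ in Ioi 0, f (τ + t) = ∫⁻ s in Ioi t, f s := by
  rw [(measurePreserving_add_right volume t).setLIntegral_comp_emb
    (measurableEmbedding_addRight t), image_add_const_Ioi, zero_add]

theorem setLIntegral_Ioi_setLIntegral_Ioi_swap {F : ℝ → ℝ → ℝ≥0∞}
    (hF : Measurable (Function.uncurry F)) :
    ∫⁻ t in Ioi 0, ∫⁻ s in Ioi t, F t s = ∫⁻ s in Ioi 0, ∫⁻ t in Ioo 0 s, F t s := by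
  let T : Set (ℝ × ℝ) := {p | 0 < p.1 ∧ p.1 < p.2}
  have hT : MeasurableSet T := by measurability
  have hleft : ∫⁻ t in Ioi 0, ∫⁻ s in Ioi t, F t s
      = ∫⁻ t, ∫⁻ s, T.indicator (Function.uncurry F) (t, s) := by
    simp only [← lintegral_indicator measurableSet_Ioi]
    congr with t
    by_cases ht : 0 < t <;> simp [indicator, ht, T]
  have hright : ∫⁻ s in Ioi 0, ∫⁻ t in Ioo 0 s, F t s
      = ∫⁻ s, ∫⁻ t, T.indicator (Function.uncurry F) (t, s) := by
    simp only [← lintegral_indicator measurableSet_Ioi, ← lintegral_indicator measurableSet_Ioo]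
    congr with s
    by_cases hs : 0 < s
    · rw [indicator_of_mem (mem_Ioi.2 hs)]
      rfl
    · rw [indicator_of_notMem (notMem_Ioi.2 (not_lt.1 hs))]
      simp [indicator_of_notMem (fun h : (_, s) ∈ T => hs (h.1.trans h.2))]
  rw [hleft, hright]
  exact lintegral_lintegral_swap (f := fun t s => T.indicator (Function.uncurry F) (t, s))
    (hF.indicator hT).aemeasurable

theorem setLIntegral_Ioi_setLIntegral_Ioi_rpow_mul_rpow_mul_comp_add {a b : ℝ} (ha : 0 < a)
    (hb : 0 < b) {φ : ℝ → ℝ≥0∞} (hφ : Measurable φ) :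
    ∫⁻ t in Ioi 0, ∫⁻ τ in Ioi 0,
        ENNReal.ofReal (t ^ (a - 1)) * ENNReal.ofReal (τ ^ (b - 1)) * φ (t + τ)
      = ENNReal.ofReal (beta a b) * ∫⁻ s in Ioi 0, ENNReal.ofReal (s ^ (a + b - 1)) * φ s := by
  have hshift : ∀ t, ∫⁻ τ in Ioi 0,
        ENNReal.ofReal (t ^ (a - 1)) * ENNReal.ofReal (τ ^ (b - 1)) * φ (t + τ)
      = ∫⁻ s in Ioi t, ENNReal.ofReal (t ^ (a - 1)) * ENNReal.ofReal ((s - t) ^ (b - 1)) * φ s :=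
    fun t => by
      rw [← setLIntegral_Ioi_zero_comp_add_right _ t]
      simp only [add_sub_cancel_right, add_comm t]
  have hbeta : ∀ s ∈ Ioi (0 : ℝ), ∫⁻ t in Ioo 0 s,
        ENNReal.ofReal (t ^ (a - 1)) * ENNReal.ofReal ((s - t) ^ (b - 1)) * φ s
      = ENNReal.ofReal (beta a b) * (ENNReal.ofReal (s ^ (a + b - 1)) * φ s) := fun s hs => by
    rw [lintegral_mul_const _ (by fun_prop),
      setLIntegral_Ioo_ofReal_rpow_mul_ofReal_sub_rpow ha hb hs, mul_assoc]
  simp_rw [hshift]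
  rw [setLIntegral_Ioi_setLIntegral_Ioi_swap (by fun_prop),
    setLIntegral_congr_fun measurableSet_Ioi hbeta, lintegral_const_mul _ (by fun_prop)]

theorem lintegral_mul_lintegral_swap {α β γ : Type*} [MeasurableSpace α] [MeasurableSpace β]
    [MeasurableSpace γ] {μ : Measure α} {ν : Measure β} {ρ : Measure γ} [SFinite μ] [SFinite ν]
    [SFinite ρ] {f : β → α → ℝ≥0∞} {g : γ → α → ℝ≥0∞} (hf : Measurable (Function.uncurry f))
    (hg : Measurable (Function.uncurry g)) :
    ∫⁻ x, (∫⁻ s, f s x ∂ν) * (∫⁻ t, g t x ∂ρ) ∂μ = ∫⁻ s, ∫⁻ t, ∫⁻ x, f s x * g t x ∂μ ∂ρ ∂ν := by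
  have hprod : ∀ x, (∫⁻ s, f s x ∂ν) * (∫⁻ t, g t x ∂ρ) = ∫⁻ s, ∫⁻ t, f s x * g t x ∂ρ ∂ν :=
    fun x => by
      rw [← lintegral_mul_const _ hf.of_uncurry_right]
      exact lintegral_congr fun s => (lintegral_const_mul _ hg.of_uncurry_right).symm
  simp_rw [hprod]
  rw [lintegral_lintegral_swap (by fun_prop)]
  exact lintegral_congr fun s => lintegral_lintegral_swap (by fun_prop)

theorem riesz_potential_convolution {G : Type*} [Group G] [MeasurableSpace G]
    [MeasurableMul₂ G] [MeasurableInv G]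
    (μ : Measure G) [SFinite μ]
    (h : ℝ × G → ENNReal) (hmeas : Measurable h)
    (hCK : ∀ t τ : ℝ, 0 < t → 0 < τ → ∀ x : G,
      ∫⁻ y, h (t, y) * h (τ, y⁻¹ * x) ∂μ = h (t + τ, x))
    (a b : ℝ) (ha : 0 < a) (hb : 0 < b) (x : G) :
    ∫⁻ y, (∫⁻ t in Ioi (0 : ℝ), ENNReal.ofReal (t ^ (a - 1)) * h (t, y)) *
          (∫⁻ τ in Ioi (0 : ℝ), ENNReal.ofReal (τ ^ (b - 1)) * h (τ, y⁻¹ * x)) ∂μ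
      = ENNReal.ofReal (Real.Gamma a * Real.Gamma b / Real.Gamma (a + b)) *
          ∫⁻ s in Ioi (0 : ℝ), ENNReal.ofReal (s ^ (a + b - 1)) * h (s, x) := by
  have hconv : ∀ t ∈ Ioi (0 : ℝ), ∀ τ ∈ Ioi (0 : ℝ),
      ∫⁻ y, ENNReal.ofReal (t ^ (a - 1)) * h (t, y) *
          (ENNReal.ofReal (τ ^ (b - 1)) * h (τ, y⁻¹ * x)) ∂μ
        = ENNReal.ofReal (t ^ (a - 1)) * ENNReal.ofReal (τ ^ (b - 1)) * h (t + τ, x) := by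
    intro t ht τ hτ
    rw [← hCK t τ ht hτ x, ← lintegral_const_mul' _ _ (by finiteness)]
    exact lintegral_congr fun y => by ring
  rw [lintegral_mul_lintegral_swap (by fun_prop) (by fun_prop),
    setLIntegral_congr_fun measurableSet_Ioi fun t ht =>
      setLIntegral_congr_fun measurableSet_Ioi (hconv t ht)]
  exact setLIntegral_Ioi_setLIntegral_Ioi_rpow_mul_rpow_mul_comp_add ha hb
    (φ := fun s => h (s, x)) (by fun_prop)
end

section
/- Let n ≥ 1 and let γ : {1,…,n} → ℕ be a multi-index all of whose entries are even, with |γ| = ∑_i γ_i. Then ∫_{B} x_1^{|γ|} dx = ((∏_i (γ_i/2)!)/((|γ|/2)!)) · ((|γ|!)/(∏_i γ_i!)) · ∫_{B} ∏_{i=1}^n x_i^{γ_i} dx, where both integrals are Lebesgue integrals over the closed unit ball B of ℝⁿ. -/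
/-!
For `f` positively homogeneous of degree `d` on an `n`-dimensional space, polar coordinates
separate `∫ f(x) h(‖x‖) dx` into a spherical factor and `∫₀^∞ r^(n-1+d) h(r) dr`. Taking for `h`
the indicator of `[0, 1]` and the Gaussian `e^(-r²)` gives
`∫_B f = (∫ f(x) e^(-‖x‖²) dx) / Γ((n + d)/2 + 1)`.
The Gaussian integral of a monomial `x^γ` factors into one-dimensional moments
`∫ t^(2m) e^(-t²) dt = Γ(m + 1/2) = (2m)! √π / (4^m m!)`, so both sides of the identity reduce to
the same Gamma factor times explicit products of factorials, `x₁^|γ|` being the monomial with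
exponent `|γ|` at the first coordinate and `0` elsewhere.
-/

open MeasureTheory Real Set
open scoped Nat

theorem Real.Gamma_nat_add_half_eq_factorial (m : ℕ) :
    Gamma (m + 1 / 2) = (2 * m)! * √π / (4 ^ m * m !) := by
  cases m with
  | zero => simp [-one_div, Gamma_one_half_eq]
  | succ k =>
    have hfac : (2 * (k + 1))! = (2 * k + 1)‼ * (2 ^ (k + 1) * (k + 1)!) := by
      rw [← Nat.doubleFactorial_two_mul, show 2 * (k + 1) = 2 * k + 1 + 1 by ring,
        Nat.factorial_eq_mul_doubleFactorial]
      ring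
    rw [hfac, Nat.cast_add_one, Gamma_nat_add_one_add_half,
      show (4 : ℝ) ^ (k + 1) = 2 ^ (k + 1) * 2 ^ (k + 1) by rw [← mul_pow]; norm_num]
    push_cast
    field_simp

theorem integral_Ioi_pow_mul_exp_neg_sq (k : ℕ) :
    ∫ r in Ioi (0 : ℝ), r ^ k * exp (-r ^ 2) = Gamma ((k + 1) / 2) / 2 := by
  have h := integral_rpow_mul_exp_neg_rpow (p := 2) (q := k) two_pos
    (neg_one_lt_zero.trans_le k.cast_nonneg)
  rw [setIntegral_congr_fun measurableSet_Ioi fun r _ => by rw [rpow_natCast, rpow_two]] at h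
  rw [h, one_div_mul_eq_div]

theorem integral_Ioi_pow_mul_indicator_Iic_one (k : ℕ) :
    ∫ r in Ioi (0 : ℝ), r ^ k * (Iic 1).indicator 1 r = ((k : ℝ) + 1)⁻¹ := by
  have h : (fun r : ℝ => r ^ k * (Iic 1).indicator 1 r) = (Iic 1).indicator (· ^ k) := by
    ext r
    simp [indicator_apply]
  rw [h, setIntegral_indicator measurableSet_Iic, Ioi_inter_Iic,
    ← intervalIntegral.integral_of_le zero_le_one, integral_pow]
  simp

theorem integral_pow_mul_exp_neg_sq_of_even {k : ℕ} (hk : Even k) :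
    ∫ t : ℝ, t ^ k * exp (-t ^ 2) = k ! * √π / (2 ^ k * (k / 2)!) := by
  obtain ⟨m, rfl⟩ := hk
  have habs : ∀ t : ℝ, |t| ^ (m + m) * exp (-|t| ^ 2) = t ^ (m + m) * exp (-t ^ 2) := fun t => by
    rw [← two_mul, pow_mul, pow_mul, sq_abs]
  calc ∫ t : ℝ, t ^ (m + m) * exp (-t ^ 2)
      = ∫ t : ℝ, |t| ^ (m + m) * exp (-|t| ^ 2) := by simp_rw [habs]
    _ = Gamma (m + 1 / 2) := by
      rw [integral_comp_abs (f := fun t => t ^ (m + m) * exp (-t ^ 2)),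
        integral_Ioi_pow_mul_exp_neg_sq]
      push_cast
      ring_nf
    _ = _ := by
      rw [Gamma_nat_add_half_eq_factorial, ← two_mul, Nat.mul_div_cancel_left _ two_pos, pow_mul]
      norm_num

theorem integral_volumeIoiPow (k : ℕ) (g : ℝ → ℝ) :
    ∫ r, g r ∂(Measure.volumeIoiPow k) = ∫ r in Ioi (0 : ℝ), r ^ k * g r := by
  rw [Measure.volumeIoiPow, integral_withDensity_eq_integral_toReal_smul
    ((measurable_subtype_coe.pow_const _).ennreal_ofReal) (by simp),
    integral_subtype_comap measurableSet_Ioi fun r => (ENNReal.ofReal (r ^ k)).toReal • g r]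
  refine setIntegral_congr_fun measurableSet_Ioi fun r hr => ?_
  rw [ENNReal.toReal_ofReal (pow_nonneg (le_of_lt hr) _), smul_eq_mul]

section Polar

variable {E : Type*} [NormedAddCommGroup E] [NormedSpace ℝ E] [FiniteDimensional ℝ E]
  [MeasurableSpace E] [BorelSpace E] [Nontrivial E] (μ : Measure E) [μ.IsAddHaarMeasure]

theorem integral_mul_norm_eq_integral_toSphere_mul {f : E → ℝ} {d : ℕ}
    (hf : ∀ r : ℝ, 0 < r → ∀ x, f (r • x) = r ^ d * f x) (h : ℝ → ℝ) :
    ∫ x, f x * h ‖x‖ ∂μ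
      = (∫ ω, f ω ∂μ.toSphere) * ∫ r in Ioi (0 : ℝ), r ^ (Module.finrank ℝ E - 1 + d) * h r := by
  set g : Metric.sphere (0 : E) 1 × Ioi (0 : ℝ) → ℝ := fun p => f p.1 * (p.2.1 ^ d * h p.2)
  have hpolar : ∀ x : ({0}ᶜ : Set E), f x * h ‖(x : E)‖ = g (homeomorphUnitSphereProd E x) := by
    intro x
    have hx : 0 < ‖(x : E)‖ := norm_pos_iff.2 x.2
    simp only [g, homeomorphUnitSphereProd_apply_fst_coe, homeomorphUnitSphereProd_apply_snd_coe]
    rw [← mul_assoc, mul_comm (f (_ • _)), ← hf _ hx, smul_inv_smul₀ hx.ne']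
  calc ∫ x, f x * h ‖x‖ ∂μ
      = ∫ x : ({0}ᶜ : Set E), f x * h ‖(x : E)‖ ∂(μ.comap (↑)) := by
        rw [integral_subtype_comap (measurableSet_singleton 0).compl (fun x => f x * h ‖x‖),
          restrict_compl_singleton]
    _ = ∫ p, g p ∂(μ.toSphere.prod (Measure.volumeIoiPow (Module.finrank ℝ E - 1))) := by
        simp_rw [hpolar]
        exact μ.measurePreserving_homeomorphUnitSphereProd.integral_comp
          (Homeomorph.measurableEmbedding _) g
    _ = _ := by
        rw [integral_prod_mul (fun ω : Metric.sphere (0 : E) 1 => f ω)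
          (fun r : Ioi (0 : ℝ) => r.1 ^ d * h r),
          integral_volumeIoiPow _ fun r => r ^ d * h r]
        simp_rw [← mul_assoc, ← pow_add]

theorem setIntegral_closedBall_eq_integral_mul_exp_neg_norm_sq_div_Gamma {f : E → ℝ} {d : ℕ}
    (hf : ∀ r : ℝ, 0 < r → ∀ x, f (r • x) = r ^ d * f x) :
    ∫ x in Metric.closedBall 0 1, f x ∂μ
      = (∫ x, f x * exp (-‖x‖ ^ 2) ∂μ) / Gamma ((Module.finrank ℝ E + d) / 2 + 1) := by
  have hball : ∫ x in Metric.closedBall 0 1, f x ∂μ = ∫ x, f x * (Iic 1).indicator 1 ‖x‖ ∂μ := by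
    rw [← integral_indicator measurableSet_closedBall]
    congr 1 with x
    by_cases hx : ‖x‖ ≤ 1 <;> simp [hx]
  have hrank := Module.finrank_pos (R := ℝ) (M := E)
  have hdim : ((Module.finrank ℝ E - 1 + d : ℕ) : ℝ) + 1 = Module.finrank ℝ E + d := by
    push_cast [Nat.sub_add_comm hrank.le, hrank]
    ring
  have hpos : (0 : ℝ) < Module.finrank ℝ E + d := by positivity
  rw [hball, integral_mul_norm_eq_integral_toSphere_mul μ hf,
    integral_mul_norm_eq_integral_toSphere_mul μ hf (fun r => exp (-r ^ 2)),
    integral_Ioi_pow_mul_indicator_Iic_one, integral_Ioi_pow_mul_exp_neg_sq, hdim,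
    Gamma_add_one (half_pos hpos).ne']
  have hGamma := (Gamma_pos_of_pos (half_pos hpos)).ne'
  field_simp

end Polar

section Monomial

variable {ι : Type*} [Fintype ι]

theorem integral_prod_pow_mul_exp_neg_norm_sq (γ : ι → ℕ) :
    ∫ x : EuclideanSpace ℝ ι, (∏ i, x i ^ γ i) * exp (-‖x‖ ^ 2)
      = ∏ i, ∫ t : ℝ, t ^ γ i * exp (-t ^ 2) := by
  have hsplit : ∀ x : EuclideanSpace ℝ ι,
      (∏ i, x i ^ γ i) * exp (-‖x‖ ^ 2) = ∏ i, (x i ^ γ i * exp (-x i ^ 2)) := fun x => by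
    rw [EuclideanSpace.norm_eq, sq_sqrt (by positivity), Finset.prod_mul_distrib,
      ← Finset.sum_neg_distrib, exp_sum]
    simp only [Real.norm_eq_abs, sq_abs]
  simp_rw [hsplit]
  rw [← integral_fintype_prod_volume_eq_prod]
  exact (EuclideanSpace.volume_preserving_symm_measurableEquiv_toLp ι).integral_comp'
    (fun y : ι → ℝ => ∏ i, (y i ^ γ i * exp (-y i ^ 2)))

theorem prod_smul_apply_pow (γ : ι → ℕ) (r : ℝ) (x : EuclideanSpace ℝ ι) :
    ∏ i, (r • x) i ^ γ i = r ^ (∑ i, γ i) * ∏ i, x i ^ γ i := by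
  simp_rw [PiLp.smul_apply, smul_eq_mul, mul_pow, Finset.prod_mul_distrib,
    Finset.prod_pow_eq_pow_sum]

theorem integral_prod_pow_mul_exp_neg_norm_sq_of_even {γ : ι → ℕ} (hγ : ∀ i, Even (γ i)) :
    ∫ x : EuclideanSpace ℝ ι, (∏ i, x i ^ γ i) * exp (-‖x‖ ^ 2)
      = √π ^ Fintype.card ι * ∏ i, ((γ i)! / (2 ^ γ i * (γ i / 2)!) : ℝ) := by
  simp_rw [integral_prod_pow_mul_exp_neg_norm_sq, integral_pow_mul_exp_neg_sq_of_even (hγ _),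
    mul_div_right_comm _ √π, Finset.prod_mul_distrib, Finset.prod_const, Finset.card_univ]
  ring

theorem setIntegral_closedBall_prod_pow_of_even [Nonempty ι] {γ : ι → ℕ} (hγ : ∀ i, Even (γ i)) :
    ∫ x in Metric.closedBall (0 : EuclideanSpace ℝ ι) 1, ∏ i, x i ^ γ i
      = √π ^ Fintype.card ι * (∏ i, ((γ i)! / (2 ^ γ i * (γ i / 2)!) : ℝ))
        / Gamma ((Fintype.card ι + ∑ i, γ i) / 2 + 1) := by
  rw [setIntegral_closedBall_eq_integral_mul_exp_neg_norm_sq_div_Gamma volume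
      fun r _ x => prod_smul_apply_pow γ r x,
    integral_prod_pow_mul_exp_neg_norm_sq_of_even hγ, finrank_euclideanSpace]

end Monomial

theorem even_moment_first_coordinate (n : ℕ) (hn : 0 < n) (γ : Fin n → ℕ)
    (hγ : ∀ i, Even (γ i)) :
    ∫ x in Metric.closedBall (0 : EuclideanSpace ℝ (Fin n)) 1, (x ⟨0, hn⟩) ^ (∑ i, γ i)
      = ((∏ i, (Nat.factorial (γ i / 2) : ℝ)) / (Nat.factorial ((∑ i, γ i) / 2) : ℝ)) *
        ((Nat.factorial (∑ i, γ i) : ℝ) / ∏ i, (Nat.factorial (γ i) : ℝ)) *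
        ∫ x in Metric.closedBall (0 : EuclideanSpace ℝ (Fin n)) 1, ∏ i, (x i) ^ (γ i) := by
  set i₀ : Fin n := ⟨0, hn⟩
  have : Nonempty (Fin n) := ⟨i₀⟩
  set D := ∑ i, γ i with hD
  set δ : Fin n → ℕ := Pi.single i₀ D
  have hδ : ∀ i, Even (δ i) := fun i => by
    rcases eq_or_ne i i₀ with rfl | hi
    · simpa [δ] using Finset.even_sum _ fun i _ => hγ i
    · simp [δ, hi]
  have hx : ∀ x : EuclideanSpace ℝ (Fin n), x i₀ ^ D = ∏ i, x i ^ δ i := fun x => by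
    rw [Fintype.prod_eq_single i₀ fun i hi => by simp [δ, hi]]
    simp [δ]
  have hδprod : ∏ i, ((δ i)! / (2 ^ δ i * (δ i / 2)!) : ℝ) = D ! / (2 ^ D * (D / 2)!) := by
    rw [Fintype.prod_eq_single i₀ fun i hi => by simp [δ, hi]]
    simp [δ]
  have hγprod : ∏ i, ((γ i)! / (2 ^ γ i * (γ i / 2)!) : ℝ)
      = (∏ i, ((γ i)! : ℝ)) / (2 ^ D * ∏ i, ((γ i / 2)! : ℝ)) := by
    rw [Finset.prod_div_distrib, Finset.prod_mul_distrib, Finset.prod_pow_eq_pow_sum]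
  simp_rw [hx]
  rw [setIntegral_closedBall_prod_pow_of_even hδ, setIntegral_closedBall_prod_pow_of_even hγ,
    hδprod, hγprod, ← hD, show ∑ i, δ i = D by simp [δ]]
  have hfac : (0 : ℝ) < ∏ i, ((γ i)! : ℝ) := Finset.prod_pos fun i _ => by positivity
  have hfac_half : (0 : ℝ) < ∏ i, ((γ i / 2)! : ℝ) := Finset.prod_pos fun i _ => by positivity
  field_simp
end
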